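/- The map Φ: {(Q,P,c̄) ∈ ℝ⁵ : Q₂≠0} → ℝ⁵, Φ(Q₁,Q₂,P₁,P₂,c̄) = (Q₁, Q₂, −Q₁P₁−Q₂P₂, P₁, H̄₁(Q,P,c̄)) with H̄₁ = P₁² − Q₂P₂² + Q₁³ − 2Q₁Q₂ + c̄/Q₂, and the map Ψ: {(q,p,c) : q₂≠0} → ℝ⁵, Ψ(q₁,q₂,p₁,p₂,c) = (q₁, q₂, p₂, −(p₁+q₁p₂)/q₂, H₂(q,p,c)) with H₂ = p₁² + (q₁²−q₂)p₂² + 2q₁p₁p₂ − q₁³q₂ + 2q₁q₂² + cq₂, are mutually inverse on the sets where q₂ = Q₂ ≠ 0. -/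

import Mathlib

/-- Extended Miura map Φ : (Q₁,Q₂,P₁,P₂,c) ↦ (q₁,q₂,p₁,p₂,c). -/
noncomputable def Phi (x : ℝ × ℝ × ℝ × ℝ × ℝ) : ℝ × ℝ × ℝ × ℝ × ℝ :=
  let Q1 := x.1; let Q2 := x.2.1; let P1 := x.2.2.1; let P2 := x.2.2.2.1
  let cb := x.2.2.2.2
  (Q1, Q2, -Q1*P1 - Q2*P2, P1,
   P1^2 - Q2*P2^2 + Q1^3 - 2*Q1*Q2 + cb/Q2)

/-- Inverse extended Miura map Ψ : (q₁,q₂,p₁,p₂,c) ↦ (Q₁,Q₂,P₁,P₂,c). -/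
noncomputable def Psi (x : ℝ × ℝ × ℝ × ℝ × ℝ) : ℝ × ℝ × ℝ × ℝ × ℝ :=
  let q1 := x.1; let q2 := x.2.1; let p1 := x.2.2.1; let p2 := x.2.2.2.1
  let c := x.2.2.2.2
  (q1, q2, p2, -(p1 + q1*p2)/q2,
   p1^2 + (q1^2 - q2)*p2^2 + 2*q1*p1*p2 - q1^3*q2 + 2*q1*q2^2 + c*q2)

theorem Psi_Phi {x : ℝ × ℝ × ℝ × ℝ × ℝ} (hQ₂ : x.2.1 ≠ 0) : Psi (Phi x) = x := by
  obtain ⟨Q₁, Q₂, P₁, P₂, c⟩ := x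
  simp only at hQ₂
  simp only [Phi, Psi, Prod.mk.injEq, true_and]
  constructor <;> field_simp <;> ring

theorem Phi_Psi {y : ℝ × ℝ × ℝ × ℝ × ℝ} (hq₂ : y.2.1 ≠ 0) : Phi (Psi y) = y := by
  obtain ⟨q₁, q₂, p₁, p₂, c⟩ := y
  simp only at hq₂
  simp only [Phi, Psi, Prod.mk.injEq, true_and]
  constructor <;> field_simp <;> ring

theorem stmt18 :
    (∀ x : ℝ × ℝ × ℝ × ℝ × ℝ, x.2.1 ≠ 0 → Psi (Phi x) = x) ∧
    (∀ y : ℝ × ℝ × ℝ × ℝ × ℝ, y.2.1 ≠ 0 → Phi (Psi y) = y) :=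
  ⟨fun _ => Psi_Phi, fun _ => Phi_Psi⟩
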